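/- Let $W$ be a Coxeter group, $x,y \in W$, and $u \in W$. Then $x \le \phi_u(y)$ in the Bruhat order if and only if $\psi_{u^{-1}}(x) \le y$ in the Bruhat order, where $\phi_u$ and $\psi_u$ denote the Demazure and anti-Demazure actions. -/

import Mathlib

/-!
For a simple reflection `s`, the maps `φ_s` and `ψ_s` are monotone for the Bruhat order, satisfy
`ψ_s ≤ id ≤ φ_s`, `φ_s ∘ ψ_s = φ_s` and `ψ_s ∘ φ_s = ψ_s`; hence `ψ_s` is left adjoint to `φ_s`,
and composing, `ψ_{s_n} ∘ ⋯ ∘ ψ_{s_1}` is left adjoint to `φ_{s_1} ∘ ⋯ ∘ φ_{s_n}` for any word.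
Monotonicity only has to be checked on covers `x ⋖ v = t x`, where it reduces to the fact that a
cover with `s x > x` and `s v < v` forces `v = s x`: a consequence of the strong exchange
condition, which is proved with Tits's cocycle `n(w, t) ∈ ZMod 2`, the parity of the number of
occurrences of `t` in the inversion sequence of a word for `w`.

It remains to see that `φ_ω` depends only on `π ω` for reduced `ω`, so that `φ_u` may be computed
along the reverse of a reduced word of `u⁻¹`: by induction, `φ_ω y` is the largest element of
`{u' y : u' ≤ π ω}`.
-/

namespace PaperStmt

open scoped Classical

variable {B : Type*} {W : Type*} [Group W] {M : CoxeterMatrix B}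

/-- Bruhat (strong) cover: `v = t * u` for a reflection `t`, with `ℓ v = ℓ u + 1`. -/
def BruhatCov (cs : CoxeterSystem M W) (u v : W) : Prop :=
  cs.length v = cs.length u + 1 ∧ ∃ t : W, cs.IsReflection t ∧ v = t * u

/-- The Bruhat (strong) order, generated by the covering relations. -/
def BruhatLe (cs : CoxeterSystem M W) : W → W → Prop :=
  Relation.ReflTransGen (BruhatCov cs)

/-- Strict Bruhat order. -/
def BruhatLt (cs : CoxeterSystem M W) (u v : W) : Prop :=
  BruhatLe cs u v ∧ u ≠ v

/-- Left weak order: `u ≤_L v` iff `ℓ(v u⁻¹) + ℓ u = ℓ v`. -/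
def leftLe (cs : CoxeterSystem M W) (u v : W) : Prop :=
  cs.length (v * u⁻¹) + cs.length u = cs.length v

/-- Right weak order: `u ≤_R v` iff `ℓ u + ℓ(u⁻¹ v) = ℓ v`. -/
def rightLe (cs : CoxeterSystem M W) (u v : W) : Prop :=
  cs.length u + cs.length (u⁻¹ * v) = cs.length v

/-- Demazure action of a simple reflection: `φ_s(x) = s x` if `s x > x`, else `x`. -/
noncomputable def phi (cs : CoxeterSystem M W) (i : B) (x : W) : W :=
  if BruhatLt cs x (cs.simple i * x) then cs.simple i * x else x

/-- Anti-Demazure action: `ψ_s(x) = s x` if `s x < x`, else `x`. -/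
noncomputable def psi (cs : CoxeterSystem M W) (i : B) (x : W) : W :=
  if BruhatLt cs (cs.simple i * x) x then cs.simple i * x else x

/-- Right anti-Demazure action: `ψ^R_s(x) = x s` if `x s < x`, else `x`. -/
noncomputable def psiR (cs : CoxeterSystem M W) (i : B) (x : W) : W :=
  if BruhatLt cs (x * cs.simple i) x then x * cs.simple i else x

/-- `φ_w` along a word `w = s_1 ⋯ s_n`: `φ_{s_1} ∘ ⋯ ∘ φ_{s_n}`. -/
noncomputable def phiWord (cs : CoxeterSystem M W) (ω : List B) (x : W) : W :=
  ω.foldr (phi cs) x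

/-- `ψ_w` along a word `w = s_1 ⋯ s_n`: `ψ_{s_1} ∘ ⋯ ∘ ψ_{s_n}`. -/
noncomputable def psiWord (cs : CoxeterSystem M W) (ω : List B) (x : W) : W :=
  ω.foldr (psi cs) x

/-- `ψ^R_w` along a word `w = s_1 ⋯ s_n`: `ψ^R_{s_n} ∘ ⋯ ∘ ψ^R_{s_1}`. -/
noncomputable def psiRWord (cs : CoxeterSystem M W) (ω : List B) (x : W) : W :=
  ω.foldl (fun y i => psiR cs i y) x

open CoxeterSystem

section ParityCocycle

variable (cs : CoxeterSystem M W)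

lemma conj_eq_iff_eq_conj_inv {G : Type*} [Group G] (g t r : G) :
    g * t * g⁻¹ = r ↔ t = g⁻¹ * r * g := by
  constructor <;> rintro rfl <;> group

noncomputable def simpleFlip (i : B) : Equiv.Perm (W × ZMod 2) :=
  Function.Involutive.toPerm
    (fun p => (cs.simple i * p.1 * cs.simple i, p.2 + if p.1 = cs.simple i then 1 else 0))
    (by
      rintro ⟨t, ε⟩
      refine Prod.ext (by simp [mul_assoc]) ?_
      have hs : cs.simple i * t * cs.simple i = cs.simple i ↔ t = cs.simple i := by
        simpa using conj_eq_iff_eq_conj_inv (cs.simple i) t (cs.simple i)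
      show ε + _ + (if cs.simple i * t * cs.simple i = cs.simple i then 1 else 0) = ε
      rw [if_congr hs rfl rfl, add_assoc, CharTwo.add_self_eq_zero, add_zero])

lemma simpleFlip_apply (i : B) (t : W) (ε : ZMod 2) :
    simpleFlip cs i (t, ε) =
      (cs.simple i * t * cs.simple i, ε + if t = cs.simple i then 1 else 0) :=
  rfl

lemma prod_map_simpleFlip_apply (ω : List B) (t : W) (ε : ZMod 2) :
    (ω.map (simpleFlip cs)).prod (t, ε) =
      (cs.wordProd ω * t * (cs.wordProd ω)⁻¹, ε + ((cs.rightInvSeq ω).count t : ZMod 2)) := by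
  induction ω with
  | nil => simp
  | cons i ω ih =>
    rw [List.map_cons, List.prod_cons, Equiv.Perm.mul_apply, ih]
    rw [simpleFlip_apply, conj_eq_iff_eq_conj_inv, rightInvSeq, List.count_cons, wordProd_cons]
    refine Prod.ext (by simp [mul_assoc]) ?_
    simp [eq_comm (b := t), add_assoc]

lemma prod_map_alternatingWord_two_mul {G : Type*} [Monoid G] (f : B → G) (i j : B) (m : ℕ) :
    ((alternatingWord i j (2 * m)).map f).prod = (f i * f j) ^ m := by
  induction m with
  | zero => simp [alternatingWord]
  | succ m ih =>
    rw [show 2 * (m + 1) = 2 * m + 1 + 1 by ring, alternatingWord_succ', alternatingWord_succ']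
    simp [ih, pow_succ', mul_assoc]

lemma alternatingWord_two_mul_reverse (i j : B) (m : ℕ) :
    (alternatingWord i j (2 * m)).reverse = alternatingWord j i (2 * m) := by
  induction m with
  | zero => simp [alternatingWord]
  | succ m ih =>
    rw [show 2 * (m + 1) = 2 * m + 1 + 1 by ring, alternatingWord_succ', alternatingWord_succ',
      alternatingWord_succ, alternatingWord_succ]
    simp [ih]

lemma leftInvSeq_alternatingWord_two_mul (i j : B) (m : ℕ) :
    cs.leftInvSeq (alternatingWord i j (2 * m)) =
      (List.range (2 * m)).map fun k => cs.simple i * (cs.simple j * cs.simple i) ^ k := by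
  refine List.ext_getElem (by simp) fun k hk _ => ?_
  rw [getElem_leftInvSeq_alternatingWord cs i j m k (by simpa using hk),
    prod_alternatingWord_eq_mul_pow]
  simp [show (2 * k + 1) / 2 = k by omega]

lemma count_map_range_two_mul_of_periodic {α : Type*} [DecidableEq α] (f : ℕ → α) (m : ℕ)
    (hf : Function.Periodic f m) (a : α) :
    (((List.range (2 * m)).map f).count a : ZMod 2) = 0 := by
  have : (List.range m).map (f ∘ (m + ·)) = (List.range m).map f :=
    List.map_congr_left fun k _ => by simp [add_comm m k, hf k]
  rw [two_mul, List.range_add, List.map_append, List.map_map, this, List.count_append]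
  push_cast
  exact CharTwo.add_self_eq_zero _

/-- The right inversion sequence of the braid word `(i j)^(M i j)` runs twice through the
reflections `s_j (s_i s_j)^k`, `k < M i j`, so every reflection occurs an even number of times. -/
lemma isLiftable_simpleFlip : M.IsLiftable (simpleFlip cs) := by
  intro i j
  ext ⟨t, ε⟩ : 1
  rw [← prod_map_alternatingWord_two_mul, prod_map_simpleFlip_apply,
    ← List.count_reverse, ← leftInvSeq_reverse, alternatingWord_two_mul_reverse,
    leftInvSeq_alternatingWord_two_mul,
    count_map_range_two_mul_of_periodic _ _ (fun k => by simp [pow_add]),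
    prod_alternatingWord_eq_mul_pow]
  simp

noncomputable def flipRep : W →* Equiv.Perm (W × ZMod 2) :=
  cs.lift ⟨simpleFlip cs, isLiftable_simpleFlip cs⟩

lemma flipRep_wordProd (ω : List B) :
    flipRep cs (cs.wordProd ω) = (ω.map (simpleFlip cs)).prod := by
  rw [CoxeterSystem.wordProd, map_list_prod, List.map_map]
  congr 2
  funext i
  exact cs.lift_apply_simple (isLiftable_simpleFlip cs) i

/-- Tits's cocycle `n(w, t)`, read off from the action `flipRep` so that it does not depend on a
choice of word for `w`. -/
noncomputable def inversionParity (w t : W) : ZMod 2 :=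
  (flipRep cs w (t, 0)).2

lemma inversionParity_wordProd (ω : List B) (t : W) :
    inversionParity cs (cs.wordProd ω) t = (cs.rightInvSeq ω).count t := by
  rw [inversionParity, flipRep_wordProd, prod_map_simpleFlip_apply, zero_add]

lemma flipRep_apply (w t : W) (ε : ZMod 2) :
    flipRep cs w (t, ε) = (w * t * w⁻¹, ε + inversionParity cs w t) := by
  obtain ⟨ω, rfl⟩ := cs.wordProd_surjective w
  rw [inversionParity_wordProd, flipRep_wordProd, prod_map_simpleFlip_apply]

lemma inversionParity_mul (u v t : W) :
    inversionParity cs (u * v) t = inversionParity cs v t + inversionParity cs u (v * t * v⁻¹) := by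
  rw [inversionParity, map_mul, Equiv.Perm.mul_apply, flipRep_apply, flipRep_apply, zero_add]

lemma inversionParity_one (t : W) : inversionParity cs 1 t = 0 := by
  simp [inversionParity]

lemma inversionParity_simple_self (i : B) : inversionParity cs (cs.simple i) (cs.simple i) = 1 := by
  simpa using inversionParity_wordProd cs [i] (cs.simple i)

lemma inversionParity_self {t : W} (ht : cs.IsReflection t) : inversionParity cs t t = 1 := by
  obtain ⟨w, i, rfl⟩ := ht
  have hinv : inversionParity cs w (cs.simple i) +
      inversionParity cs w⁻¹ (w * cs.simple i * w⁻¹) = 0 := by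
    simpa [inversionParity_one] using (inversionParity_mul cs w⁻¹ w (cs.simple i)).symm
  nth_rewrite 1 [mul_assoc w]
  rw [inversionParity_mul, inversionParity_mul,
    show w⁻¹ * (w * cs.simple i * w⁻¹) * w⁻¹⁻¹ = cs.simple i by group,
    show cs.simple i * w⁻¹ * (w * cs.simple i * w⁻¹) * (cs.simple i * w⁻¹)⁻¹ = cs.simple i by group,
    inversionParity_simple_self]
  linear_combination hinv

lemma mem_rightInvSeq_of_inversionParity_eq_one {ω : List B} {t : W}
    (h : inversionParity cs (cs.wordProd ω) t = 1) : t ∈ cs.rightInvSeq ω := by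
  rw [inversionParity_wordProd] at h
  refine List.count_pos_iff.mp (Nat.pos_of_ne_zero fun h0 => ?_)
  rw [h0, Nat.cast_zero] at h
  exact zero_ne_one h

lemma isRightInversion_of_inversionParity_eq_one {w t : W} (h : inversionParity cs w t = 1) :
    cs.IsRightInversion w t := by
  obtain ⟨ω, hω, rfl⟩ := cs.exists_isReduced w
  exact cs.isRightInversion_of_mem_rightInvSeq hω (mem_rightInvSeq_of_inversionParity_eq_one cs h)

lemma inversionParity_eq_one_iff {w t : W} (ht : cs.IsReflection t) :
    inversionParity cs w t = 1 ↔ cs.IsRightInversion w t := by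
  refine ⟨isRightInversion_of_inversionParity_eq_one cs, fun h => ?_⟩
  have hmul : inversionParity cs w t = 1 + inversionParity cs (w * t) t := by
    have := inversionParity_mul cs (w * t) t t
    rwa [mul_inv_cancel_right, inversionParity_self cs ht, mul_assoc, ht.mul_self, mul_one] at this
  by_contra hne
  have hflip : ∀ a b : ZMod 2, a = 1 + b → a ≠ 1 → b = 1 := by decide
  exact ht.isRightInversion_mul_left_iff.mp
    (isRightInversion_of_inversionParity_eq_one cs (hflip _ _ hmul hne)) h

/-- The strong exchange condition. -/
theorem mem_rightInvSeq_of_isRightInversion (ω : List B) {t : W}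
    (h : cs.IsRightInversion (cs.wordProd ω) t) : t ∈ cs.rightInvSeq ω :=
  mem_rightInvSeq_of_inversionParity_eq_one cs ((inversionParity_eq_one_iff cs h.1).mpr h)

end ParityCocycle

section Bruhat

variable {cs : CoxeterSystem M W}

@[refl]
lemma BruhatLe.refl (x : W) : BruhatLe cs x x := Relation.ReflTransGen.refl

lemma BruhatLe.trans {x y z : W} (h : BruhatLe cs x y) (h' : BruhatLe cs y z) :
    BruhatLe cs x z :=
  Relation.ReflTransGen.trans h h'

lemma BruhatCov.bruhatLe {x y : W} (h : BruhatCov cs x y) : BruhatLe cs x y := .single h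

lemma BruhatLe.length_le {u v : W} (h : BruhatLe cs u v) : cs.length u ≤ cs.length v := by
  induction h with
  | refl => rfl
  | tail _ hcov ih => exact ih.trans (hcov.1 ▸ Nat.le_succ _)

lemma BruhatLe.antisymm {u v : W} (h : BruhatLe cs u v) (h' : BruhatLe cs v u) : u = v := by
  rcases Relation.ReflTransGen.cases_tail h with rfl | ⟨c, hc, hcov⟩
  · rfl
  · have := BruhatLe.length_le hc
    have := h'.length_le
    have := hcov.1
    omega

lemma isLeftDescent_simple_mul_iff {w : W} {i : B} :
    cs.IsLeftDescent (cs.simple i * w) i ↔ ¬cs.IsLeftDescent w i := by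
  rw [cs.isLeftDescent_iff_not_isLeftDescent_mul, simple_mul_simple_cancel_left]

variable (cs) in
lemma bruhatCov_simple_mul {x : W} {i : B} (h : ¬cs.IsLeftDescent x i) :
    BruhatCov cs x (cs.simple i * x) :=
  ⟨cs.not_isLeftDescent_iff.mp h, cs.simple i, cs.isReflection_simple i, rfl⟩

variable (cs) in
lemma bruhatLe_simple_mul {x : W} {i : B} (h : ¬cs.IsLeftDescent x i) :
    BruhatLe cs x (cs.simple i * x) :=
  (bruhatCov_simple_mul cs h).bruhatLe

variable (cs) in
lemma simple_mul_bruhatLe {x : W} {i : B} (h : cs.IsLeftDescent x i) :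
    BruhatLe cs (cs.simple i * x) x := by
  have := bruhatLe_simple_mul cs (x := cs.simple i * x)
    (by rwa [isLeftDescent_simple_mul_iff, not_not])
  rwa [simple_mul_simple_cancel_left] at this

lemma BruhatCov.simple_mul {x v : W} {i : B} (h : BruhatCov cs x v)
    (hl : cs.length (cs.simple i * v) = cs.length (cs.simple i * x) + 1) :
    BruhatCov cs (cs.simple i * x) (cs.simple i * v) := by
  obtain ⟨-, t, ht, rfl⟩ := h
  refine ⟨hl, cs.simple i * t * cs.simple i, by simpa using ht.conj (cs.simple i), ?_⟩
  simp [mul_assoc]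

lemma BruhatCov.simple_mul_eq {x v : W} {i : B} (h : BruhatCov cs x v)
    (hx : ¬cs.IsLeftDescent x i) (hv : cs.IsLeftDescent v i) : cs.simple i * x = v := by
  obtain ⟨hlen, t, ht, rfl⟩ := h
  obtain ⟨α, hα, hαv⟩ := cs.exists_isReduced (cs.simple i * (t * x))
  have hv' : t * x = cs.wordProd (i :: α) := by
    rw [wordProd_cons, ← hαv, simple_mul_simple_cancel_left]
  set t' := x⁻¹ * t * x
  have hxt : x = t * x * t' := by simp [t', ← mul_assoc, ht.mul_self]
  have hinv : cs.IsRightInversion (cs.wordProd (i :: α)) t' := by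
    refine ⟨by simpa using ht.conj x⁻¹, ?_⟩
    rw [← hv', ← hxt]
    omega
  rcases List.mem_cons.mp (mem_rightInvSeq_of_isRightInversion cs _ hinv) with h | h
  · have hxα : x = cs.wordProd α := by
      rw [hxt, hv', h, wordProd_cons]
      simp [mul_assoc]
    rw [hv', hxα, wordProd_cons]
  · have hlt := (cs.isRightInversion_of_mem_rightInvSeq hα h).2
    have : cs.simple i * x = cs.wordProd α * t' := by
      rw [hxt, hv', wordProd_cons, ← mul_assoc, simple_mul_simple_cancel_left]
    have hαlen : cs.length (cs.wordProd α) + 1 = cs.length (t * x) := by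
      rw [← hαv]; exact cs.isLeftDescent_iff.mp hv
    exact absurd (show cs.length (cs.simple i * x) < cs.length x by rw [this]; omega) hx

end Bruhat

section Demazure

variable {cs : CoxeterSystem M W} {i : B}

variable (cs) in
lemma bruhatLt_simple_mul_iff {x : W} :
    BruhatLt cs x (cs.simple i * x) ↔ ¬cs.IsLeftDescent x i := by
  refine ⟨fun h hd => ?_, fun h => ⟨bruhatLe_simple_mul cs h, fun he => ?_⟩⟩
  · have := h.1.length_le
    have := cs.isLeftDescent_iff.mp hd
    omega
  · have := cs.not_isLeftDescent_iff.mp h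
    rw [← he] at this
    omega

variable (cs) in
lemma simple_mul_bruhatLt_iff {x : W} :
    BruhatLt cs (cs.simple i * x) x ↔ cs.IsLeftDescent x i := by
  have := bruhatLt_simple_mul_iff cs (i := i) (x := cs.simple i * x)
  rwa [simple_mul_simple_cancel_left, isLeftDescent_simple_mul_iff, not_not] at this

lemma phi_of_isLeftDescent {x : W} (h : cs.IsLeftDescent x i) : phi cs i x = x :=
  if_neg fun h' => (bruhatLt_simple_mul_iff cs).mp h' h

lemma phi_of_not_isLeftDescent {x : W} (h : ¬cs.IsLeftDescent x i) :
    phi cs i x = cs.simple i * x :=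
  if_pos ((bruhatLt_simple_mul_iff cs).mpr h)

lemma psi_of_isLeftDescent {x : W} (h : cs.IsLeftDescent x i) :
    psi cs i x = cs.simple i * x :=
  if_pos ((simple_mul_bruhatLt_iff cs).mpr h)

lemma psi_of_not_isLeftDescent {x : W} (h : ¬cs.IsLeftDescent x i) : psi cs i x = x :=
  if_neg fun h' => h ((simple_mul_bruhatLt_iff cs).mp h')

lemma phi_simple_mul_of_isLeftDescent {x : W} (h : cs.IsLeftDescent x i) :
    phi cs i (cs.simple i * x) = x := by
  rw [phi_of_not_isLeftDescent (by rwa [isLeftDescent_simple_mul_iff, not_not]),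
    simple_mul_simple_cancel_left]

lemma psi_simple_mul_of_not_isLeftDescent {x : W} (h : ¬cs.IsLeftDescent x i) :
    psi cs i (cs.simple i * x) = x := by
  rw [psi_of_isLeftDescent (isLeftDescent_simple_mul_iff.mpr h), simple_mul_simple_cancel_left]

lemma bruhatLe_phi (x : W) : BruhatLe cs x (phi cs i x) := by
  by_cases h : cs.IsLeftDescent x i
  · rw [phi_of_isLeftDescent h]
  · rw [phi_of_not_isLeftDescent h]
    exact bruhatLe_simple_mul cs h

lemma simple_mul_bruhatLe_phi (x : W) : BruhatLe cs (cs.simple i * x) (phi cs i x) := by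
  by_cases h : cs.IsLeftDescent x i
  · rw [phi_of_isLeftDescent h]
    exact simple_mul_bruhatLe cs h
  · rw [phi_of_not_isLeftDescent h]

lemma psi_bruhatLe (x : W) : BruhatLe cs (psi cs i x) x := by
  by_cases h : cs.IsLeftDescent x i
  · rw [psi_of_isLeftDescent h]
    exact simple_mul_bruhatLe cs h
  · rw [psi_of_not_isLeftDescent h]

lemma phi_psi (x : W) : phi cs i (psi cs i x) = phi cs i x := by
  by_cases h : cs.IsLeftDescent x i
  · rw [psi_of_isLeftDescent h, phi_of_isLeftDescent h, phi_simple_mul_of_isLeftDescent h]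
  · rw [psi_of_not_isLeftDescent h]

lemma psi_phi (x : W) : psi cs i (phi cs i x) = psi cs i x := by
  by_cases h : cs.IsLeftDescent x i
  · rw [phi_of_isLeftDescent h]
  · rw [phi_of_not_isLeftDescent h, psi_of_not_isLeftDescent h,
      psi_simple_mul_of_not_isLeftDescent h]

lemma BruhatCov.phi_bruhatLe_phi {x v : W} (h : BruhatCov cs x v) :
    BruhatLe cs (phi cs i x) (phi cs i v) := by
  by_cases hx : cs.IsLeftDescent x i
  · rw [phi_of_isLeftDescent hx]
    exact h.bruhatLe.trans (bruhatLe_phi v)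
  by_cases hv : cs.IsLeftDescent v i
  · rw [phi_of_not_isLeftDescent hx, phi_of_isLeftDescent hv, h.simple_mul_eq hx hv]
  · rw [phi_of_not_isLeftDescent hx, phi_of_not_isLeftDescent hv]
    refine (h.simple_mul ?_).bruhatLe
    have := h.1
    rw [cs.not_isLeftDescent_iff] at hx hv
    omega

lemma BruhatCov.psi_bruhatLe_psi {x v : W} (h : BruhatCov cs x v) :
    BruhatLe cs (psi cs i x) (psi cs i v) := by
  by_cases hv : cs.IsLeftDescent v i
  swap
  · rw [psi_of_not_isLeftDescent hv]
    exact (psi_bruhatLe x).trans h.bruhatLe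
  by_cases hx : cs.IsLeftDescent x i
  · rw [psi_of_isLeftDescent hx, psi_of_isLeftDescent hv]
    refine (h.simple_mul ?_).bruhatLe
    have := h.1
    rw [cs.isLeftDescent_iff] at hx hv
    omega
  · rw [psi_of_not_isLeftDescent hx, psi_of_isLeftDescent hv, ← h.simple_mul_eq hx hv,
      simple_mul_simple_cancel_left]

lemma BruhatLe.phi_mono {x y : W} (h : BruhatLe cs x y) : BruhatLe cs (phi cs i x) (phi cs i y) :=
  Relation.ReflTransGen.lift' (phi cs i) (fun _ _ => BruhatCov.phi_bruhatLe_phi) _ _ h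

lemma BruhatLe.psi_mono {x y : W} (h : BruhatLe cs x y) : BruhatLe cs (psi cs i x) (psi cs i y) :=
  Relation.ReflTransGen.lift' (psi cs i) (fun _ _ => BruhatCov.psi_bruhatLe_psi) _ _ h

lemma bruhatLe_phi_iff (x y : W) :
    BruhatLe cs x (phi cs i y) ↔ BruhatLe cs (psi cs i x) y := by
  refine ⟨fun h => ?_, fun h => ?_⟩
  · have hx := h.psi_mono (i := i)
    rw [psi_phi] at hx
    exact hx.trans (psi_bruhatLe y)
  · have hy := h.phi_mono (i := i)
    rw [phi_psi] at hy
    exact (bruhatLe_phi x).trans hy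

lemma phiWord_cons (ω : List B) (y : W) : phiWord cs (i :: ω) y = phi cs i (phiWord cs ω y) := rfl

lemma psiWord_append (ω ω' : List B) (x : W) :
    psiWord cs (ω ++ ω') x = psiWord cs ω (psiWord cs ω' x) :=
  List.foldr_append

lemma bruhatLe_phiWord_iff (ω : List B) (x y : W) :
    BruhatLe cs x (phiWord cs ω y) ↔ BruhatLe cs (psiWord cs ω.reverse x) y := by
  induction ω generalizing x with
  | nil => rfl
  | cons i ω ih =>
    rw [phiWord_cons, bruhatLe_phi_iff, ih, List.reverse_cons, psiWord_append]
    rfl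

end Demazure

section DemazureProduct

variable {cs : CoxeterSystem M W}

lemma not_isLeftDescent_of_isReduced_cons {i : B} {ω : List B} (h : cs.IsReduced (i :: ω)) :
    ¬cs.IsLeftDescent (cs.wordProd ω) i := by
  have h' : cs.length (cs.simple i * cs.wordProd ω) = ω.length + 1 := by
    simpa [CoxeterSystem.IsReduced, wordProd_cons] using h
  have := cs.length_wordProd_le ω
  rw [cs.not_isLeftDescent_iff]
  rcases cs.length_simple_mul (cs.wordProd ω) i with h'' | h'' <;> omega

lemma exists_bruhatLe_wordProd_phiWord_eq_mul {ω : List B} (hω : cs.IsReduced ω) (y : W) :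
    ∃ u, BruhatLe cs u (cs.wordProd ω) ∧ phiWord cs ω y = u * y := by
  induction ω with
  | nil => exact ⟨1, .refl 1, (one_mul y).symm⟩
  | cons i ω ih =>
    obtain ⟨u, hu, he⟩ := ih (by simpa using hω.drop 1)
    have hup := not_isLeftDescent_of_isReduced_cons hω
    rw [phiWord_cons, he, wordProd_cons, ← phi_of_not_isLeftDescent hup]
    by_cases h : cs.IsLeftDescent (u * y) i
    · exact ⟨u, hu.trans (bruhatLe_phi _), phi_of_isLeftDescent h⟩
    · refine ⟨cs.simple i * u, (simple_mul_bruhatLe_phi u).trans hu.phi_mono, ?_⟩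
      rw [phi_of_not_isLeftDescent h, mul_assoc]

lemma mul_bruhatLe_phiWord {ω : List B} (hω : cs.IsReduced ω) {u : W}
    (hu : BruhatLe cs u (cs.wordProd ω)) (y : W) : BruhatLe cs (u * y) (phiWord cs ω y) := by
  induction ω generalizing u with
  | nil =>
    obtain rfl : u = 1 := cs.length_eq_zero_iff.mp (by simpa using hu.length_le)
    rw [one_mul]
    rfl
  | cons i ω ih =>
    have hup := not_isLeftDescent_of_isReduced_cons hω
    have hψ : BruhatLe cs (psi cs i u) (cs.wordProd ω) := by
      have := hu.psi_mono (i := i)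
      rwa [wordProd_cons, psi_simple_mul_of_not_isLeftDescent hup] at this
    refine BruhatLe.trans ?_ (ih (by simpa using hω.drop 1) hψ).phi_mono
    by_cases h : cs.IsLeftDescent u i
    · rw [psi_of_isLeftDescent h, mul_assoc]
      have := simple_mul_bruhatLe_phi (cs := cs) (i := i) (cs.simple i * (u * y))
      rwa [simple_mul_simple_cancel_left] at this
    · rw [psi_of_not_isLeftDescent h]
      exact bruhatLe_phi _

lemma phiWord_eq_of_wordProd_eq {ω ω' : List B} (hω : cs.IsReduced ω) (hω' : cs.IsReduced ω')
    (h : cs.wordProd ω = cs.wordProd ω') (y : W) : phiWord cs ω y = phiWord cs ω' y := by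
  obtain ⟨u, hu, he⟩ := exists_bruhatLe_wordProd_phiWord_eq_mul hω y
  obtain ⟨u', hu', he'⟩ := exists_bruhatLe_wordProd_phiWord_eq_mul hω' y
  have h₁ := mul_bruhatLe_phiWord hω' (h ▸ hu) y
  have h₂ := mul_bruhatLe_phiWord hω (h ▸ hu') y
  rw [← he] at h₁
  rw [← he'] at h₂
  exact h₁.antisymm h₂

end DemazureProduct

/-- `x ≤ φ_u(y)` iff `ψ_{u⁻¹}(x) ≤ y`, with `φ_u` and `ψ_{u⁻¹}` computed along
any reduced words `ω` for `u` and `ω'` for `u⁻¹`. -/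
theorem stmt18 (cs : CoxeterSystem M W) (x y u : W) (ω ω' : List B)
    (hred : cs.IsReduced ω) (hω : cs.wordProd ω = u)
    (hred' : cs.IsReduced ω') (hω' : cs.wordProd ω' = u⁻¹) :
    BruhatLe cs x (phiWord cs ω y) ↔ BruhatLe cs (psiWord cs ω' x) y := by
  have hrev : cs.IsReduced ω'.reverse := (cs.isReduced_reverse_iff ω').mpr hred'
  rw [phiWord_eq_of_wordProd_eq hred hrev (by rw [hω, wordProd_reverse, hω', inv_inv]),
    bruhatLe_phiWord_iff, List.reverse_reverse]
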